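/- Let ℓ₀, ℓ₁, ℓ₂ > 0 satisfy |ℓ₁ − ℓ₂| ≤ ℓ₀ ≤ ℓ₁ + ℓ₂, let m := (ℓ₁ + ℓ₂ − ℓ₀)/2, and let θ₀ := arccos((cosh ℓ₁ · cosh ℓ₂ − cosh ℓ₀)/(sinh ℓ₁ · sinh ℓ₂)) ∈ [0, π]. Then θ₀ ≤ 4·exp(−m). (This is Lemma 2.1(b) of the paper for curvature −1: the angle of a hyperbolic geodesic triangle at a vertex x₀ is at most 4·e^{−(x₁|x₂)_{x₀}}.) -/

import Mathlib

/-!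
Write `ℓ₁ = a + m`, `ℓ₂ = b + m`, so that `ℓ₀ = a + b` with `a, b, m ≥ 0`. The law of cosines
becomes `1 - cos θ₀ = 2 sinh a sinh b / (sinh ℓ₁ sinh ℓ₂)`, and `sinh (x - m) ≤ e^{-m} sinh x`
bounds this by `2 e^{-2m}`. Jordan's inequality `1 - cos θ ≥ 2 θ² / π²` on `[0, π]` then gives
`θ₀ ≤ π e^{-m} ≤ 4 e^{-m}`.
-/

open Real

lemma sinh_sub_le_exp_neg_mul_sinh {m : ℝ} (hm : 0 ≤ m) (x : ℝ) :
    sinh (x - m) ≤ exp (-m) * sinh x := by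
  have hgap : exp (-m) * sinh x - sinh (x - m) = sinh m * (cosh x - sinh x) := by
    rw [sinh_sub, ← cosh_sub_sinh]; ring
  rw [← sub_nonneg, hgap]
  exact mul_nonneg (sinh_nonneg_iff.2 hm) (sub_nonneg.2 (sinh_lt_cosh x).le)

lemma cosh_add_mul_cosh_add_sub_cosh_add (a b m : ℝ) :
    cosh (a + m) * cosh (b + m) - cosh (a + b) =
      sinh (a + m) * sinh (b + m) - 2 * sinh a * sinh b := by
  simp only [cosh_add, sinh_add]
  linear_combination (cosh a * cosh b - sinh a * sinh b) * cosh_sq_sub_sinh_sq m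

lemma arccos_le_pi_mul_of_one_sub_le {c ε : ℝ} (hε : 0 ≤ ε) (h : 1 - c ≤ 2 * ε ^ 2) :
    arccos c ≤ π * ε := by
  rcases le_or_gt c (-1) with hc | hc
  · rw [arccos_of_le_neg_one hc]
    have hε₁ : 1 ≤ ε := by nlinarith
    nlinarith [pi_pos]
  rcases le_or_gt 1 c with hc' | hc'
  · rw [arccos_of_one_le hc']; positivity
  have hθ : |arccos c| ≤ π := by rw [abs_of_nonneg (arccos_nonneg c)]; exact arccos_le_pi c
  have hJordan := cos_le_one_sub_mul_cos_sq hθ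
  rw [cos_arccos hc.le hc'.le] at hJordan
  have hsq : arccos c ^ 2 ≤ (π * ε) ^ 2 :=
    calc arccos c ^ 2 = π ^ 2 / 2 * (2 / π ^ 2 * arccos c ^ 2) := by field_simp
      _ ≤ π ^ 2 / 2 * (2 * ε ^ 2) := mul_le_mul_of_nonneg_left (by linarith) (by positivity)
      _ = (π * ε) ^ 2 := by ring
  exact (pow_le_pow_iff_left₀ (arccos_nonneg c) (by positivity) two_ne_zero).1 hsq

lemma one_sub_div_le_two_mul_exp_neg_sq {ℓ₀ ℓ₁ ℓ₂ m : ℝ} (h₁ : 0 < ℓ₁) (h₂ : 0 < ℓ₂)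
    (htri₁ : |ℓ₁ - ℓ₂| ≤ ℓ₀) (htri₂ : ℓ₀ ≤ ℓ₁ + ℓ₂) (hm : m = (ℓ₁ + ℓ₂ - ℓ₀) / 2) :
    1 - (cosh ℓ₁ * cosh ℓ₂ - cosh ℓ₀) / (sinh ℓ₁ * sinh ℓ₂) ≤ 2 * exp (-m) ^ 2 := by
  obtain ⟨hlo, hhi⟩ := abs_le.1 htri₁
  have hm0 : 0 ≤ m := by rw [hm]; linarith
  have ha : 0 ≤ sinh (ℓ₁ - m) := sinh_nonneg_iff.2 (by rw [hm]; linarith)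
  have hb : 0 ≤ sinh (ℓ₂ - m) := sinh_nonneg_iff.2 (by rw [hm]; linarith)
  have hS : 0 < sinh ℓ₁ * sinh ℓ₂ := mul_pos (sinh_pos_iff.2 h₁) (sinh_pos_iff.2 h₂)
  have hidentity := cosh_add_mul_cosh_add_sub_cosh_add (ℓ₁ - m) (ℓ₂ - m) m
  rw [sub_add_cancel, sub_add_cancel, show ℓ₁ - m + (ℓ₂ - m) = ℓ₀ by rw [hm]; ring] at hidentity
  rw [hidentity, sub_div, div_self hS.ne', sub_sub_cancel, div_le_iff₀ hS]
  calc 2 * sinh (ℓ₁ - m) * sinh (ℓ₂ - m)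
      ≤ 2 * (exp (-m) * sinh ℓ₁) * (exp (-m) * sinh ℓ₂) := by
        gcongr <;> exact sinh_sub_le_exp_neg_mul_sinh hm0 _
    _ = 2 * exp (-m) ^ 2 * (sinh ℓ₁ * sinh ℓ₂) := by ring

theorem angle_le_four_exp_neg_gromov_general (ℓ₀ ℓ₁ ℓ₂ m θ₀ : ℝ)
    (h₁ : 0 < ℓ₁) (h₂ : 0 < ℓ₂)
    (htri₁ : |ℓ₁ - ℓ₂| ≤ ℓ₀) (htri₂ : ℓ₀ ≤ ℓ₁ + ℓ₂)
    (hm : m = (ℓ₁ + ℓ₂ - ℓ₀) / 2)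
    (hθ : θ₀ = arccos ((cosh ℓ₁ * cosh ℓ₂ - cosh ℓ₀) / (sinh ℓ₁ * sinh ℓ₂))) :
    θ₀ ≤ 4 * exp (-m) := by
  rw [hθ]
  calc _ ≤ π * exp (-m) := arccos_le_pi_mul_of_one_sub_le (exp_pos _).le
          (one_sub_div_le_two_mul_exp_neg_sq h₁ h₂ htri₁ htri₂ hm)
    _ ≤ 4 * exp (-m) := by gcongr; exact pi_le_four

/-- Lemma 2.1(b) of the paper for curvature `-1`: the angle `θ₀` of a hyperbolic geodesic
triangle at a vertex is at most `4·e^{-m}` where `m` is the Gromov product of the two other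
vertices seen from that vertex. -/
theorem angle_le_four_exp_neg_gromov (ℓ₀ ℓ₁ ℓ₂ m θ₀ : ℝ)
    (h₀ : 0 < ℓ₀) (h₁ : 0 < ℓ₁) (h₂ : 0 < ℓ₂)
    (htri₁ : |ℓ₁ - ℓ₂| ≤ ℓ₀) (htri₂ : ℓ₀ ≤ ℓ₁ + ℓ₂)
    (hm : m = (ℓ₁ + ℓ₂ - ℓ₀) / 2)
    (hθ : θ₀ = arccos ((cosh ℓ₁ * cosh ℓ₂ - cosh ℓ₀) / (sinh ℓ₁ * sinh ℓ₂))) :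
    θ₀ ≤ 4 * exp (-m) :=
  angle_le_four_exp_neg_gromov_general ℓ₀ ℓ₁ ℓ₂ m θ₀ h₁ h₂ htri₁ htri₂ hm hθ
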